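/- Let I = I_{g,(m_1,…,m_n)} ⊆ R and let 𝔪 be the graded maximal ideal of R (the ideal generated by all the variables x_{j,k} and y_A). Let T = (t_{j,k}) be the g×n matrix with t_{j,k} = d_k − 1 for all 1 ≤ j ≤ g, 1 ≤ k ≤ n, and set S = X^T = Π_{j,k} x_{j,k}^{d_k − 1}. Then S ∉ I and S·𝔪 ⊆ I; that is, S ∈ (I : 𝔪) \ I, so the image of S in R/I is a nonzero socle element and depth(R/I) = 0. -/

import Mathlib

open MvPolynomial Finset

noncomputable section

namespace Paper

open scoped Classical

variable (K : Type) [Field K] (g n : ℕ) (m : Fin n → ℕ)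

/-- `d k = m_k + m_{k+1} + ⋯ + m_n + 1` (with `k` zero-indexed). -/
def dd (k : Fin n) : ℕ := (∑ k' ∈ Finset.Ici k, m k') + 1

/-- `M k`: equals `m k` for the last index and `m k - 1` otherwise. -/
def MM (k : Fin n) : ℕ := if k.val = n - 1 then m k else m k - 1

/-- The membership predicate for the set `𝒜_k` (for `0 ≤ k ≤ n`):
columns (zero-indexed) `< k` have entries bounded by `M` and column sum `m`,
and all later columns vanish. -/
def mem𝒜 (k : ℕ) (A : Fin g → Fin n → ℕ) : Prop :=
  ∀ k' : Fin n,
    (k'.val < k → (∀ j, A j k' ≤ MM n m k') ∧ (∑ j, A j k' = m k')) ∧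
    (k ≤ k'.val → ∀ j, A j k' = 0)

/-- The (finite) set `𝒜_k` of admissible `g × n` matrices. -/
def 𝒜 (k : ℕ) : Finset (Fin g → Fin n → ℕ) :=
  (Fintype.piFinset fun _ : Fin g => Fintype.piFinset fun k' : Fin n =>
      Finset.range (m k' + 1)).filter (mem𝒜 g n m k)

/-- The variables of the ring `R`: the `x_{j,k}` and one `y_A` for each `A ∈ 𝒜_n`. -/
def Var : Type := (Fin g × Fin n) ⊕ {A : Fin g → Fin n → ℕ // A ∈ 𝒜 g n m n}

/-- The variable `x_{j,k}`. -/
def xv (j : Fin g) (k : Fin n) : MvPolynomial (Var g n m) K := X (Sum.inl (j, k))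

/-- The variable `y_A` for `A ∈ 𝒜_n`. -/
def yv (B : {A : Fin g → Fin n → ℕ // A ∈ 𝒜 g n m n}) : MvPolynomial (Var g n m) K :=
  X (Sum.inr B)

/-- The monomial `X^A = ∏_{j,k} x_{j,k}^{A j k}`. -/
def Xpow (A : Fin g → Fin n → ℕ) : MvPolynomial (Var g n m) K :=
  ∏ j : Fin g, ∏ k : Fin n, xv K g n m j k ^ A j k

/-- The polynomial `f`. -/
def ff : MvPolynomial (Var g n m) K :=
  (∑ k : Fin (n - 1), ∑ A ∈ 𝒜 g n m k.val, ∑ j : Fin g,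
      Xpow K g n m A
        * xv K g n m j ⟨k.val, by have := k.isLt; omega⟩ ^ m ⟨k.val, by have := k.isLt; omega⟩
        * xv K g n m j ⟨k.val + 1, by have := k.isLt; omega⟩ ^
            dd n m ⟨k.val + 1, by have := k.isLt; omega⟩)
  + ∑ B : {A : Fin g → Fin n → ℕ // A ∈ 𝒜 g n m n},
      Xpow K g n m B.1 * yv K g n m B

/-- The ideal `I_{g,(m_1,…,m_n)} = (x_{1,1}^d, …, x_{g,1}^d, f)`. -/
def paperIdeal (hn : 0 < n) : Ideal (MvPolynomial (Var g n m) K) :=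
  Ideal.span
    ((Set.range fun j : Fin g => xv K g n m j ⟨0, hn⟩ ^ dd n m ⟨0, hn⟩) ∪ {ff K g n m})


/-- The socle witness `S = X^T` where `T` is the `g × n` matrix with `t_{j,k} = d_k - 1`. -/
def SS : MvPolynomial (Var g n m) K := Xpow K g n m fun _ k => dd n m k - 1

/-!
Index the columns from `0`. Write `T_{<k}` for the exponent matrix with entries `d_c - 1` in the
columns `c < k` and `0` elsewhere, and `G_{k,j} = X^{T_{<k}} x_{j,k}^{d_k}`. Since `S x_{j,k}` is
divisible by `G_{k,j}`, the variables `x` are handled by showing `G_{k,j} ∈ I`, by induction on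
`k`; `G_{0,j}` is a generator. For the step fix `A ∈ 𝒜_k` (it exists because `g ≥ 2` and
`m_c ≥ 2`), put `P = A + m_k e_{j,k}` and expand `X^{T_{<k+1} - P} f`. The term coming from
`(k, A, j)` is `G_{k+1,j}`. Every other term is `X^{T_{<k+1} - P + E}` with `E` the exponent of a
term of `f`; in the first column `c ≤ k` where `E` and `P` differ, the column sum of `E` is at
least `m_c`, the column sum of `P`, so `E_{i,c} > P_{i,c}` for some `i` and the term is divisible
by `G_{c,i} ∈ I`. Expanding `X^{T_{<n} - B} f` for `B ∈ 𝒜_n` in the same way isolates `S y_B`.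
Finally `S ∉ I` because `I` lies in the monomial ideal generated by the `x_{j,k}^{d_k}` and the
`y_B`, none of which divides `S`.
-/

theorem _root_.Finset.exists_lt_of_sum_le_of_ne {ι M : Type*} [AddCommMonoid M] [LinearOrder M]
    [IsOrderedCancelAddMonoid M] {s : Finset ι} {f g : ι → M}
    (hsum : ∑ i ∈ s, f i ≤ ∑ i ∈ s, g i) (hne : ∃ i ∈ s, f i ≠ g i) : ∃ i ∈ s, f i < g i := by
  by_contra! hle
  obtain ⟨i, hi, hfg⟩ := hne
  exact (Finset.sum_lt_sum hle ⟨i, hi, (hle i hi).lt_of_ne' hfg⟩).not_ge hsum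

theorem _root_.Ideal.mem_of_sum_mem_of_forall_ne {ι R : Type*} [CommRing R] {I : Ideal R}
    {s : Finset ι} {t : ι → R} {i₀ : ι} (hi₀ : i₀ ∈ s) (hsum : ∑ i ∈ s, t i ∈ I)
    (hne : ∀ i ∈ s, i ≠ i₀ → t i ∈ I) : t i₀ ∈ I := by
  rw [← Finset.add_sum_erase s t hi₀] at hsum
  refine (I.add_mem_iff_left (I.sum_mem fun i hi => ?_)).mp hsum
  exact hne i (Finset.mem_of_mem_erase hi) (Finset.ne_of_mem_erase hi)

theorem _root_.MvPolynomial.monomial_one_notMem_span_X_pow {σ R : Type*} [CommSemiring R]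
    [Nontrivial R] {e : σ → ℕ} {s : σ →₀ ℕ} (hs : ∀ v, s v < e v) :
    monomial s (1 : R) ∉ Ideal.span (Set.range fun v => X v ^ e v) := by
  have hrange : (Set.range fun v => X v ^ e v : Set (MvPolynomial σ R)) =
      (fun s => monomial s 1) '' Set.range fun v => Finsupp.single v (e v) := by
    rw [← Set.range_comp]
    simp [Function.comp_def, X_pow_eq_monomial]
  rw [hrange, mem_ideal_span_monomial_image]
  intro h
  obtain ⟨_, ⟨v, rfl⟩, hle⟩ := h s (by simp [support_monomial])
  exact lt_irrefl _ ((hs v).trans_le (by simpa using hle v))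

theorem _root_.MvPolynomial.prod_X_pow_notMem_span_X_pow {σ ι R : Type*} [CommSemiring R]
    [Nontrivial R] [Fintype ι] {i : ι → σ} (hi : Function.Injective i) {a : ι → ℕ} {e : σ → ℕ}
    (ha : ∀ x, a x < e (i x)) (he : ∀ v, 0 < e v) :
    ∏ x, X (i x) ^ a x ∉ Ideal.span (Set.range fun v => (X v : MvPolynomial σ R) ^ e v) := by
  rw [← Finset.prod_congr rfl fun x _ => (X_pow_eq_monomial (R := R)).symm, ← monomial_sum_one]
  refine monomial_one_notMem_span_X_pow fun v => ?_
  rw [Finsupp.finsetSum_apply]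
  by_cases hv : ∃ x, i x = v
  · obtain ⟨x, rfl⟩ := hv
    rw [Finset.sum_eq_single x (fun y _ hyx => Finsupp.single_eq_of_ne (hi.ne hyx).symm)
      (by simp)]
    simpa using ha x
  · push Not at hv
    rw [Finset.sum_eq_zero fun x _ => Finsupp.single_eq_of_ne (hv x).symm]
    exact he v

section

variable {K : Type} [Field K] {g n : ℕ} {m : Fin n → ℕ}

local notation "𝕏" => Xpow K g n m

theorem Xpow_add (A B : Fin g → Fin n → ℕ) : 𝕏 (A + B) = 𝕏 A * 𝕏 B := by
  simp only [Xpow, Pi.add_apply, pow_add, Finset.prod_mul_distrib]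

theorem Xpow_mem_of_le {I : Ideal (MvPolynomial (Var g n m) K)} {A B : Fin g → Fin n → ℕ}
    (hA : 𝕏 A ∈ I) (hAB : A ≤ B) : 𝕏 B ∈ I := by
  rw [← tsub_add_cancel_of_le hAB, Xpow_add]
  exact I.mul_mem_left _ hA

theorem Xpow_single (j : Fin g) (k : Fin n) (a : ℕ) :
    𝕏 (Pi.single j (Pi.single k a)) = xv K g n m j k ^ a := by
  rw [Xpow, Fintype.prod_eq_single j fun j' hj' => by simp [hj'],
    Fintype.prod_eq_single k fun k' hk' => by simp [hk']]
  simp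

variable (m) in
theorem lt_dd (c : Fin n) : m c < dd n m c := by
  have : m c ≤ ∑ c' ∈ Finset.Ici c, m c' := Finset.single_le_sum (by simp) (by simp)
  unfold dd
  omega

variable (m) in
theorem MM_le (c : Fin n) : MM n m c ≤ m c := by
  unfold MM
  split_ifs <;> omega

theorem MM_eq_of_succ_lt {c : Fin n} (hc : c.val + 1 < n) : MM n m c = m c - 1 := by
  unfold MM
  rw [if_neg (by omega)]

theorem sum_eq_of_mem_𝒜 {k : ℕ} {A : Fin g → Fin n → ℕ} (hA : A ∈ 𝒜 g n m k) {c : Fin n}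
    (hc : c.val < k) : ∑ j, A j c = m c :=
  (((Finset.mem_filter.mp hA).2 c).1 hc).2

theorem le_MM_of_mem_𝒜 {k : ℕ} {A : Fin g → Fin n → ℕ} (hA : A ∈ 𝒜 g n m k) {c : Fin n}
    (hc : c.val < k) (j : Fin g) : A j c ≤ MM n m c :=
  (((Finset.mem_filter.mp hA).2 c).1 hc).1 j

theorem eq_zero_of_mem_𝒜 {k : ℕ} {A : Fin g → Fin n → ℕ} (hA : A ∈ 𝒜 g n m k) {c : Fin n}
    (hc : k ≤ c.val) (j : Fin g) : A j c = 0 :=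
  ((Finset.mem_filter.mp hA).2 c).2 hc j

theorem 𝒜_nonempty (hg : 2 ≤ g) {k : ℕ} (hm : ∀ c : Fin n, c.val < k → 2 ≤ m c) :
    (𝒜 g n m k).Nonempty := by
  let A : Fin g → Fin n → ℕ := fun j c =>
    if c.val < k then (Pi.single ⟨0, by omega⟩ (m c - 1) + Pi.single ⟨1, hg⟩ 1 : Fin g → ℕ) j
    else 0
  have hMM : ∀ c : Fin n, c.val < k → 1 ≤ m c - 1 ∧ m c - 1 ≤ MM n m c := fun c hc => by
    have := hm c hc
    unfold MM
    split_ifs <;> omega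
  refine ⟨A, Finset.mem_filter.mpr ⟨?_, fun c => ⟨fun hc => ⟨fun j => ?_, ?_⟩, fun hc j => ?_⟩⟩⟩
  · simp only [Fintype.mem_piFinset, Finset.mem_range]
    intro j c
    by_cases hc : c.val < k
    · have := hm c hc
      simp only [A, if_pos hc, Pi.add_apply, Pi.single_apply, Fin.ext_iff]
      split_ifs <;> omega
    · simp [A, hc]
  · have := hMM c hc
    simp only [A, if_pos hc, Pi.add_apply, Pi.single_apply, Fin.ext_iff]
    split_ifs <;> omega
  · have := hMM c hc
    simp only [A, if_pos hc, Pi.add_apply, Finset.sum_add_distrib, Finset.sum_pi_single',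
      Finset.mem_univ, if_true]
    omega
  · simp [A, hc]

-- `socleExpLT m k` is `T_{<k}`, `partialSocleExp m k j` the exponent of `G_{k,j}`, and
-- `fTermExp m k A j` the exponent of the term of `f` indexed by `(k, A, j)`; `fTermHead m k A j`,
-- the `P` of the induction step, omits its factor `x_{j,k+1}^{d_{k+1}}`.
variable (m) in
def socleExpLT (k : ℕ) : Fin g → Fin n → ℕ := fun _ c => if c.val < k then dd n m c - 1 else 0

variable (m) in
def partialSocleExp (c : Fin n) (j : Fin g) : Fin g → Fin n → ℕ :=
  socleExpLT m c + Pi.single j (Pi.single c (dd n m c))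

variable (m) in
def fTermHead (k : Fin (n - 1)) (A : Fin g → Fin n → ℕ) (j : Fin g) : Fin g → Fin n → ℕ :=
  A + Pi.single j (Pi.single ⟨k, by omega⟩ (m ⟨k, by omega⟩))

variable (m) in
def fTermExp (k : Fin (n - 1)) (A : Fin g → Fin n → ℕ) (j : Fin g) : Fin g → Fin n → ℕ :=
  fTermHead m k A j + Pi.single j (Pi.single ⟨k + 1, by omega⟩ (dd n m ⟨k + 1, by omega⟩))

theorem socleExpLT_zero : socleExpLT m 0 = (0 : Fin g → Fin n → ℕ) := by
  ext
  simp [socleExpLT]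

theorem SS_eq_Xpow_socleExpLT : SS K g n m = 𝕏 (socleExpLT m n) := by
  rw [SS]
  congr 1
  ext i c
  simp [socleExpLT]

theorem partialSocleExp_apply (c : Fin n) (j i : Fin g) (c' : Fin n) :
    partialSocleExp m c j i c' =
      if c' < c then dd n m c' - 1 else if i = j ∧ c' = c then dd n m c else 0 := by
  simp only [partialSocleExp, socleExpLT, Pi.add_apply, Pi.single_apply, Fin.lt_def]
  split_ifs <;> simp_all [Pi.single_apply, Fin.ext_iff]
  omega

theorem fTermHead_apply (k : Fin (n - 1)) (A : Fin g → Fin n → ℕ) (j i : Fin g) (c : Fin n) :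
    fTermHead m k A j i c = A i c + if i = j ∧ c.val = k then m c else 0 := by
  obtain ⟨c, hc⟩ := c
  simp only [fTermHead, Pi.add_apply, Pi.single_apply, apply_ite (fun f : Fin n → ℕ => f ⟨c, hc⟩),
    Pi.zero_apply, Fin.mk.injEq]
  split_ifs <;> subst_vars <;> simp_all

theorem fTermExp_apply (k : Fin (n - 1)) (A : Fin g → Fin n → ℕ) (j i : Fin g) (c : Fin n) :
    fTermExp m k A j i c = fTermHead m k A j i c + if i = j ∧ c.val = k + 1 then dd n m c else 0 := by
  obtain ⟨c, hc⟩ := c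
  simp only [fTermExp, Pi.add_apply, Pi.single_apply, apply_ite (fun f : Fin n → ℕ => f ⟨c, hc⟩),
    Pi.zero_apply, Fin.mk.injEq]
  split_ifs <;> subst_vars <;> simp_all

theorem Xpow_fTermExp (k : Fin (n - 1)) (A : Fin g → Fin n → ℕ) (j : Fin g) :
    𝕏 (fTermExp m k A j) = 𝕏 A * xv K g n m j ⟨k, by omega⟩ ^ m ⟨k, by omega⟩
      * xv K g n m j ⟨k + 1, by omega⟩ ^ dd n m ⟨k + 1, by omega⟩ := by
  simp only [fTermExp, fTermHead, Xpow_add, Xpow_single]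

theorem Xpow_mul_ff (W : Fin g → Fin n → ℕ) :
    𝕏 W * ff K g n m =
      (∑ k : Fin (n - 1), ∑ A ∈ 𝒜 g n m k, ∑ j, 𝕏 (W + fTermExp m k A j)) +
        ∑ B : {A // A ∈ 𝒜 g n m n}, 𝕏 (W + B.1) * yv K g n m B := by
  simp only [ff, Xpow_add, Xpow_fTermExp, mul_add, Finset.mul_sum, mul_assoc]

theorem sum_fTermExp_apply (k : Fin (n - 1)) (A : Fin g → Fin n → ℕ) (j : Fin g) (c : Fin n) :
    ∑ i, fTermExp m k A j i c =
      ∑ i, A i c + (if c.val = k then m c else 0) + (if c.val = k + 1 then dd n m c else 0) := by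
  obtain ⟨c, hc⟩ := c
  simp only [fTermExp, fTermHead, Pi.add_apply, Finset.sum_add_distrib, Pi.single_apply,
    apply_ite (fun f : Fin n → ℕ => f ⟨c, hc⟩), Pi.zero_apply, Finset.sum_ite_eq',
    Finset.mem_univ, if_true, Fin.mk.injEq]
  split_ifs <;> subst_vars <;> first | rfl | omega

theorem le_sum_fTermExp_apply {k : Fin (n - 1)} {A : Fin g → Fin n → ℕ} (hA : A ∈ 𝒜 g n m k)
    (j : Fin g) {c : Fin n} (hc : c.val ≤ k + 1) : m c ≤ ∑ i, fTermExp m k A j i c := by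
  rw [sum_fTermExp_apply]
  rcases lt_trichotomy c.val k with hlt | heq | hgt
  · rw [sum_eq_of_mem_𝒜 hA hlt]
    omega
  · simp [heq]
  · have := lt_dd m c
    simp only [if_neg hgt.ne', if_pos (show c.val = k + 1 by omega)]
    omega

theorem sum_fTermExp_apply_succ {k : Fin (n - 1)} {A : Fin g → Fin n → ℕ} (hA : A ∈ 𝒜 g n m k)
    (j : Fin g) : ∑ i, fTermExp m k A j i ⟨k + 1, by omega⟩ = dd n m ⟨k + 1, by omega⟩ := by
  rw [sum_fTermExp_apply, Finset.sum_eq_zero fun i _ => eq_zero_of_mem_𝒜 hA (by simp) i]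
  simp

theorem fTermHead_le_socleExpLT {k : Fin (n - 1)} {A : Fin g → Fin n → ℕ}
    (hA : A ∈ 𝒜 g n m k) (j : Fin g) : fTermHead m k A j ≤ socleExpLT m (k + 1) := by
  intro i c
  have := lt_dd m c
  change fTermHead m k A j i c ≤ socleExpLT m (k + 1) i c
  rw [fTermHead_apply, socleExpLT]
  rcases lt_trichotomy c.val k with hlt | heq | hgt
  · have := le_MM_of_mem_𝒜 hA hlt i
    have := MM_le m c
    simp only [hlt.ne, and_false, if_false, if_pos (show c.val < k + 1 by omega)]
    omega
  · rw [eq_zero_of_mem_𝒜 hA heq.ge i, if_pos (show c.val < k + 1 by omega)]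
    split_ifs <;> omega
  · rw [eq_zero_of_mem_𝒜 hA hgt.le i, if_neg (by omega), if_neg (by omega)]

theorem sum_fTermHead_apply {k : Fin (n - 1)} {A : Fin g → Fin n → ℕ}
    (hA : A ∈ 𝒜 g n m k) (j : Fin g) {c : Fin n} (hc : c.val < k + 1) :
    ∑ i, fTermHead m k A j i c = m c := by
  simp only [fTermHead_apply, Finset.sum_add_distrib, ite_and, Finset.sum_ite_eq',
    Finset.mem_univ, if_true]
  rcases (Nat.lt_succ_iff.mp hc).lt_or_eq with hlt | heq
  · rw [sum_eq_of_mem_𝒜 hA hlt, if_neg hlt.ne, add_zero]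
  · rw [Finset.sum_eq_zero fun i _ => eq_zero_of_mem_𝒜 hA heq.ge i, if_pos heq, zero_add]

theorem exists_fTermExp_apply_ne {k k' : Fin (n - 1)} {A A' : Fin g → Fin n → ℕ}
    (hA : A ∈ 𝒜 g n m k) (hA' : A' ∈ 𝒜 g n m k') (hmk : 1 ≤ m ⟨k, by omega⟩) {j j' : Fin g}
    (hkk' : k ≤ k') (hne : k' ≠ k ∨ A' ≠ A ∨ j' ≠ j) :
    ∃ c : Fin n, c.val ≤ k ∧ ∃ i, fTermExp m k' A' j' i c ≠ fTermHead m k A j i c := by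
  have hAk : A j ⟨k, by omega⟩ = 0 := eq_zero_of_mem_𝒜 hA le_rfl j
  rcases hkk'.lt_or_eq with hlt | rfl
  · refine ⟨⟨k, by omega⟩, le_rfl, j, ?_⟩
    have := le_MM_of_mem_𝒜 hA' (c := ⟨k, by omega⟩) hlt j
    rw [MM_eq_of_succ_lt (by dsimp only; omega)] at this
    rw [fTermExp_apply, fTermHead_apply, fTermHead_apply, hAk]
    simp only [Fin.lt_def] at hlt
    simp only [hlt.ne, (show (k : ℕ) ≠ k' + 1 by omega), and_false, if_false, and_self, if_true]
    omega
  · by_cases hA'A : A' = A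
    · subst hA'A
      have hj : j' ≠ j := by simpa using hne
      refine ⟨⟨k, by omega⟩, le_rfl, j, ?_⟩
      simp only [fTermExp_apply, fTermHead_apply, hAk, hj.symm, and_true, ↓reduceIte, add_zero,
        zero_add, and_self, Nat.left_eq_add, one_ne_zero, ne_eq]
      omega
    · obtain ⟨i, hi⟩ := Function.ne_iff.mp hA'A
      obtain ⟨c, hc⟩ := Function.ne_iff.mp hi
      have hck : c.val < k := by
        by_contra! hkc
        exact hc ((eq_zero_of_mem_𝒜 hA' hkc i).trans (eq_zero_of_mem_𝒜 hA hkc i).symm)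
      refine ⟨c, hck.le, i, ?_⟩
      simpa [fTermExp_apply, fTermHead_apply, hck.ne, (show c.val ≠ k + 1 by omega)] using hc

section

variable (hn : 0 < n)

local notation "𝓘" => paperIdeal K g n m hn

theorem xv_pow_dd_mem (j : Fin g) : xv K g n m j ⟨0, hn⟩ ^ dd n m ⟨0, hn⟩ ∈ 𝓘 :=
  Ideal.subset_span (Or.inl ⟨j, rfl⟩)

theorem ff_mem : ff K g n m ∈ 𝓘 :=
  Ideal.subset_span (Or.inr rfl)

theorem Xpow_socleExpLT_sub_add_mem {kk : ℕ} {P E : Fin g → Fin n → ℕ}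
    (hL : ∀ c : Fin n, c.val < kk → ∀ j, 𝕏 (partialSocleExp m c j) ∈ 𝓘)
    (hP : P ≤ socleExpLT m kk) (hPsum : ∀ c : Fin n, c.val < kk → ∑ j, P j c = m c)
    (c : Fin n) (hc : c.val < kk) (hne : ∃ j, E j c ≠ P j c)
    (hsum : ∀ c' ≤ c, m c' ≤ ∑ j, E j c') : 𝕏 (socleExpLT m kk - P + E) ∈ 𝓘 := by
  induction c using WellFoundedLT.induction with
  | _ c ih =>
  by_cases hfirst : ∃ c' < c, ∃ j, E j c' ≠ P j c'
  · obtain ⟨c', hc', hne'⟩ := hfirst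
    exact ih c' hc' (by omega) hne' fun c'' h => hsum c'' (h.trans hc'.le)
  push Not at hfirst
  obtain ⟨j, -, hlt⟩ := Finset.exists_lt_of_sum_le_of_ne
    ((hPsum c hc).trans_le (hsum c le_rfl)) (by simpa [eq_comm] using hne)
  refine Xpow_mem_of_le (hL c hc j) fun i c' => ?_
  have hPic : P i c' ≤ socleExpLT m kk i c' := hP i c'
  rw [partialSocleExp_apply]
  simp only [Pi.add_apply, Pi.sub_apply, socleExpLT] at hPic ⊢
  rcases lt_or_ge c' c with h1 | h1
  · rw [if_pos h1, hfirst c' h1 i, tsub_add_cancel_of_le hPic, if_pos (by omega)]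
  · rw [if_neg h1.not_gt]
    by_cases h2 : i = j ∧ c' = c
    · obtain ⟨rfl, rfl⟩ := h2
      rw [if_pos ⟨rfl, rfl⟩]
      rw [if_pos hc] at hPic ⊢
      omega
    · rw [if_neg h2]
      exact Nat.zero_le _

theorem Xpow_fTermExp_mem {kk : ℕ} {P : Fin g → Fin n → ℕ}
    (hL : ∀ c : Fin n, c.val < kk → ∀ j, 𝕏 (partialSocleExp m c j) ∈ 𝓘)
    (hP : P ≤ socleExpLT m kk) (hPsum : ∀ c : Fin n, c.val < kk → ∑ j, P j c = m c)
    {k : Fin (n - 1)} {A : Fin g → Fin n → ℕ} (hA : A ∈ 𝒜 g n m k) (j : Fin g)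
    (c : Fin n) (hc : c.val < kk) (hck : c.val ≤ k + 1) (hne : ∃ i, fTermExp m k A j i c ≠ P i c) :
    𝕏 (socleExpLT m kk - P + fTermExp m k A j) ∈ 𝓘 :=
  Xpow_socleExpLT_sub_add_mem hn hL hP hPsum c hc hne fun c' hc' =>
    le_sum_fTermExp_apply hA j (by rw [Fin.le_def] at hc'; omega)

theorem Xpow_fTermExp_mem_of_succ_lt {kk : ℕ} {P : Fin g → Fin n → ℕ}
    (hL : ∀ c : Fin n, c.val < kk → ∀ j, 𝕏 (partialSocleExp m c j) ∈ 𝓘)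
    (hP : P ≤ socleExpLT m kk) (hPsum : ∀ c : Fin n, c.val < kk → ∑ j, P j c = m c)
    {k : Fin (n - 1)} {A : Fin g → Fin n → ℕ} (hA : A ∈ 𝒜 g n m k) (j : Fin g)
    (hk : k.val + 1 < kk) : 𝕏 (socleExpLT m kk - P + fTermExp m k A j) ∈ 𝓘 := by
  refine Xpow_fTermExp_mem hn hL hP hPsum hA j ⟨k + 1, by omega⟩ hk le_rfl ?_
  by_contra! h
  have hsum := Finset.sum_congr rfl fun i (_ : i ∈ Finset.univ) => h i
  rw [sum_fTermExp_apply_succ hA, hPsum _ hk] at hsum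
  exact (lt_dd m _).ne' hsum

theorem Xpow_mul_yv_mem {kk : ℕ} {P : Fin g → Fin n → ℕ}
    (hL : ∀ c : Fin n, c.val < kk → ∀ j, 𝕏 (partialSocleExp m c j) ∈ 𝓘)
    (hP : P ≤ socleExpLT m kk) (hPsum : ∀ c : Fin n, c.val < kk → ∑ j, P j c = m c)
    (B : {A // A ∈ 𝒜 g n m n}) (c : Fin n) (hc : c.val < kk) (hne : ∃ i, B.1 i c ≠ P i c) :
    𝕏 (socleExpLT m kk - P + B.1) * yv K g n m B ∈ 𝓘 :=
  Ideal.mul_mem_right _ _ <| Xpow_socleExpLT_sub_add_mem hn hL hP hPsum c hc hne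
    fun c' _ => (sum_eq_of_mem_𝒜 B.2 c'.isLt).ge

theorem Xpow_fTermExp_mem_of_ne {k : Fin (n - 1)} {A : Fin g → Fin n → ℕ}
    (hA : A ∈ 𝒜 g n m k) (hmk : 1 ≤ m ⟨k, by omega⟩) (j : Fin g)
    (hL : ∀ c : Fin n, c.val < k + 1 → ∀ j, 𝕏 (partialSocleExp m c j) ∈ 𝓘)
    {k' : Fin (n - 1)} {A' : Fin g → Fin n → ℕ} (hA' : A' ∈ 𝒜 g n m k') (j' : Fin g)
    (hne : k' ≠ k ∨ A' ≠ A ∨ j' ≠ j) :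
    𝕏 (socleExpLT m (k + 1) - fTermHead m k A j + fTermExp m k' A' j') ∈ 𝓘 := by
  have hP := fTermHead_le_socleExpLT hA j
  have hPsum := fun c => sum_fTermHead_apply (c := c) hA j
  rcases lt_or_ge k' k with hlt | hge
  · exact Xpow_fTermExp_mem_of_succ_lt hn hL hP hPsum hA' j' (by rw [Fin.lt_def] at hlt; omega)
  · obtain ⟨c, hck, hc⟩ := exists_fTermExp_apply_ne hA hA' hmk hge hne
    exact Xpow_fTermExp_mem hn hL hP hPsum hA' j' c (by omega) (by rw [Fin.le_def] at hge; omega) hc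

theorem partialSocleExp_succ_mem {k : Fin (n - 1)} {A : Fin g → Fin n → ℕ}
    (hA : A ∈ 𝒜 g n m k) (hmk : 1 ≤ m ⟨k, by omega⟩) (j : Fin g)
    (hL : ∀ c : Fin n, c.val < k + 1 → ∀ j, 𝕏 (partialSocleExp m c j) ∈ 𝓘) :
    𝕏 (partialSocleExp m ⟨k + 1, by omega⟩ j) ∈ 𝓘 := by
  have hP := fTermHead_le_socleExpLT hA j
  have hPsum := fun c => sum_fTermHead_apply (c := c) hA j
  have hW := Ideal.mul_mem_left _ (𝕏 (socleExpLT m (k + 1) - fTermHead m k A j)) (ff_mem hn)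
  rw [Xpow_mul_ff] at hW
  have hy : ∑ B : {A // A ∈ 𝒜 g n m n},
      𝕏 (socleExpLT m (k + 1) - fTermHead m k A j + B.1) * yv K g n m B ∈ 𝓘 := by
    refine Ideal.sum_mem _ fun B _ => Xpow_mul_yv_mem hn hL hP hPsum B ⟨k, by omega⟩
      (Nat.lt_succ_self k) ⟨j, ne_of_lt ?_⟩
    have := le_MM_of_mem_𝒜 B.2 (c := ⟨k, by omega⟩) (by omega) j
    rw [MM_eq_of_succ_lt (by dsimp only; omega)] at this
    simp only [fTermHead_apply, eq_zero_of_mem_𝒜 hA (c := ⟨k, by omega⟩) le_rfl j, and_self,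
      ↓reduceIte, zero_add, gt_iff_lt]
    omega
  have hx := (Ideal.add_mem_iff_left _ hy).mp hW
  have hk := Ideal.mem_of_sum_mem_of_forall_ne (Finset.mem_univ k) hx fun k' _ hk' =>
    Ideal.sum_mem _ fun A' hA' => Ideal.sum_mem _ fun j' _ =>
      Xpow_fTermExp_mem_of_ne hn hA hmk j hL hA' j' (Or.inl hk')
  have hkA := Ideal.mem_of_sum_mem_of_forall_ne hA hk fun A' hA' hA'A =>
    Ideal.sum_mem _ fun j' _ => Xpow_fTermExp_mem_of_ne hn hA hmk j hL hA' j' (Or.inr (Or.inl hA'A))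
  have hkAj := Ideal.mem_of_sum_mem_of_forall_ne (Finset.mem_univ j) hkA fun j' _ hj' =>
    Xpow_fTermExp_mem_of_ne hn hA hmk j hL hA j' (Or.inr (Or.inr hj'))
  rwa [fTermExp, ← add_assoc, tsub_add_cancel_of_le hP] at hkAj

theorem partialSocleExp_mem (hg : 2 ≤ g) (hm2 : ∀ i : Fin n, i.val + 2 < n → 2 ≤ m i)
    (hm1 : ∀ i : Fin n, i.val + 2 = n → 1 ≤ m i) (c : Fin n) (j : Fin g) :
    𝕏 (partialSocleExp m c j) ∈ 𝓘 := by
  induction c using WellFoundedLT.induction generalizing j with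
  | _ c ih =>
  obtain ⟨_ | k, hc⟩ := c
  · rw [partialSocleExp, socleExpLT_zero, zero_add, Xpow_single]
    exact xv_pow_dd_mem hn j
  · obtain ⟨A, hA⟩ := 𝒜_nonempty (m := m) hg (k := k) fun c hc => hm2 c (by omega)
    have hmk : 1 ≤ m ⟨k, by omega⟩ := by
      rcases Nat.lt_or_ge (k + 2) n with h | h
      · exact (hm2 ⟨k, by omega⟩ h).trans' (by norm_num)
      · exact hm1 ⟨k, by omega⟩ (by dsimp only; omega)
    exact partialSocleExp_succ_mem (k := ⟨k, by omega⟩) hn hA hmk j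
      fun c hc j => ih c (by simp only [Fin.lt_def] at hc ⊢; omega) j

theorem SS_mul_xv_mem (hL : ∀ c j, 𝕏 (partialSocleExp m c j) ∈ 𝓘) (j : Fin g) (c : Fin n) :
    SS K g n m * xv K g n m j c ∈ 𝓘 := by
  rw [SS_eq_Xpow_socleExpLT, ← pow_one (xv K g n m j c), ← Xpow_single, ← Xpow_add]
  refine Xpow_mem_of_le (hL c j) fun i c' => ?_
  simp only [partialSocleExp_apply, Pi.add_apply, socleExpLT, c'.isLt, if_true]
  split_ifs with hc' hic
  · exact Nat.le_add_right _ _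
  · obtain ⟨rfl, rfl⟩ := hic
    have := lt_dd m c'
    simp only [Pi.single_eq_same]
    omega
  · exact Nat.zero_le _

theorem SS_mul_yv_mem (hL : ∀ c j, 𝕏 (partialSocleExp m c j) ∈ 𝓘) (B : {A // A ∈ 𝒜 g n m n}) :
    SS K g n m * yv K g n m B ∈ 𝓘 := by
  have hP : B.1 ≤ socleExpLT m n := fun i c => by
    have := le_MM_of_mem_𝒜 B.2 c.isLt i
    have := MM_le m c
    have := lt_dd m c
    simp only [socleExpLT, c.isLt, if_true]
    omega
  have hPsum := fun (c : Fin n) (_ : c.val < n) => sum_eq_of_mem_𝒜 B.2 c.isLt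
  have hW := Ideal.mul_mem_left _ (𝕏 (socleExpLT m n - B.1)) (ff_mem hn)
  rw [Xpow_mul_ff] at hW
  have hx : ∑ k : Fin (n - 1), ∑ A ∈ 𝒜 g n m k, ∑ j, 𝕏 (socleExpLT m n - B.1 + fTermExp m k A j)
      ∈ 𝓘 := Ideal.sum_mem _ fun k _ => Ideal.sum_mem _ fun A hA => Ideal.sum_mem _ fun j _ =>
    Xpow_fTermExp_mem_of_succ_lt hn (fun c _ => hL c) hP hPsum (k := k) hA j (by omega)
  have hB := Ideal.mem_of_sum_mem_of_forall_ne (Finset.mem_univ B)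
    ((Ideal.add_mem_iff_right _ hx).mp hW) fun B' _ hB' => by
      obtain ⟨i, hi⟩ := Function.ne_iff.mp (Subtype.coe_injective.ne hB')
      obtain ⟨c, hc⟩ := Function.ne_iff.mp hi
      exact Xpow_mul_yv_mem hn (fun c _ => hL c) hP hPsum B' c c.isLt ⟨i, hc⟩
  rwa [tsub_add_cancel_of_le hP, ← SS_eq_Xpow_socleExpLT] at hB

theorem paperIdeal_le_span_X_pow :
    𝓘 ≤ Ideal.span (Set.range fun v : Var g n m =>
      (X v : MvPolynomial (Var g n m) K) ^ Sum.elim (fun p => dd n m p.2) (fun _ => 1) v) := by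
  rw [paperIdeal, Ideal.span_le]
  rintro _ (⟨j, rfl⟩ | rfl)
  · exact Ideal.subset_span ⟨Sum.inl (j, ⟨0, hn⟩), rfl⟩
  · refine add_mem (Ideal.sum_mem _ fun k _ => Ideal.sum_mem _ fun A _ => Ideal.sum_mem _
      fun j _ => Ideal.mul_mem_left _ _ (Ideal.subset_span ⟨Sum.inl (j, ⟨k + 1, by omega⟩), rfl⟩))
      (Ideal.sum_mem _ fun B _ => Ideal.mul_mem_left _ _ (Ideal.subset_span ⟨Sum.inr B, pow_one _⟩))

theorem SS_notMem : SS K g n m ∉ 𝓘 := by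
  rw [SS, Xpow, ← Fintype.prod_prod_type']
  refine fun h => prod_X_pow_notMem_span_X_pow Sum.inl_injective (fun p => ?_) (fun v => ?_)
    (paperIdeal_le_span_X_pow hn h)
  · have := lt_dd m p.2
    simp only [Sum.elim_inl]
    omega
  · rcases v with ⟨j, c⟩ | B
    · have := lt_dd m c
      simp only [Sum.elim_inl]
      omega
    · exact Nat.one_pos

end

end

/-- Theorem: `depth (R/I) = 0`.  With `I = I_{g,(m_1,…,m_n)}`,
`𝔪` the graded maximal ideal of `R` (generated by all variables) and
`S = ∏_{j,k} x_{j,k}^{d_k - 1}`, we have `S ∉ I` and `S·𝔪 ⊆ I`, i.e.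
`S ∈ (I : 𝔪) \ I`; hence the image of `S` is a nonzero socle element of `R/I`. -/
theorem statement1 (hg : 2 ≤ g) (hn : 0 < n)
    (hm2 : ∀ i : Fin n, i.val + 2 < n → 2 ≤ m i)
    (hm1 : ∀ i : Fin n, i.val + 2 = n → 1 ≤ m i) :
    SS K g n m ∉ paperIdeal K g n m hn ∧
    SS K g n m ∈
      (paperIdeal K g n m hn).colon
        (Ideal.span (Set.range (X : Var g n m → MvPolynomial (Var g n m) K))) := by
  have hL := partialSocleExp_mem (K := K) hn hg hm2 hm1
  refine ⟨SS_notMem hn, ?_⟩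
  rw [Ideal.colon_span, Submodule.mem_colon]
  rintro _ ⟨(⟨j, c⟩ | B), rfl⟩
  · exact SS_mul_xv_mem hn hL j c
  · exact SS_mul_yv_mem hn hL B

end Paper
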